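/- arXiv:1707.04214 — 2 statements merged into one kernel-verified Lean document; each statement's English description precedes it below -/
import Mathlib

section
/- For every n ≥ 1, the symmetrization identity Σ_{σ∈S_n} σ{ ∏_{i>j} 1/(1 - z_i/z_j) · ∏_{i>j+1} (1 - q z_i/z_j) · ∏_{i≥2} (1 - z_i) } = 1 holds in the field of rational functions ℚ(q, z_1, …, z_n). -/
/-!
Split the symmetrization according to the variable `z_{σ 0}` placed first. Removing the first
variable `a` from the weight leaves the weight of the remaining variables times
`∏ (1 - q z/a) / (1 - z/a)`, except that the new first variable `b` trades its factor
`1 - q b/a` for `1 - b`. So one proves, by induction on `n`, the stronger identity in which every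
summand carries an extra factor `φ(z_{σ 0})`: the sum is
`∑_p φ(z_p) ∏_{m ≠ p} (1 - z_m)/(1 - z_m/z_p)`. For `φ(b) = (1 - b)/(1 - q b/a)` the right side
collapses to `∏ φ(z_i)` by the partial fraction identity
`∑_p ∏_{m ≠ p} (1 - c z_m)/(1 - z_m/z_p) = 1`, the sum of the Lagrange basis polynomials at the
nodes `1/z_i` evaluated at `c`; with `φ = 1` and `c = 1` the same identity gives the theorem.
-/

open Finset

/-- The field of rational functions `ℚ(q, z_1, …, z_n)`. -/
noncomputable abbrev KQ (n : ℕ) : Type := FractionRing (MvPolynomial (Option (Fin n)) ℚ)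

noncomputable def qV (n : ℕ) : KQ n :=
  algebraMap (MvPolynomial (Option (Fin n)) ℚ) (KQ n) (MvPolynomial.X none)

noncomputable def zV (n : ℕ) (i : Fin n) : KQ n :=
  algebraMap (MvPolynomial (Option (Fin n)) ℚ) (KQ n) (MvPolynomial.X (some i))

open Equiv Function

section Fin

variable {M : Type*} [CommMonoid M] {n : ℕ}

theorem Fin.prod_filter_pos_eq_prod_succ (f : Fin (n + 1) → M) :
    ∏ i ∈ univ.filter (fun i : Fin (n + 1) => 0 < (i : ℕ)), f i = ∏ i : Fin n, f i.succ := by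
  rw [prod_filter, Fin.prod_univ_succ]
  simp

theorem Fin.prod_filter_lt_succ (f : Fin (n + 1) × Fin (n + 1) → M) :
    ∏ p ∈ univ.filter (fun p : Fin (n + 1) × Fin (n + 1) => p.2 < p.1), f p =
      (∏ i : Fin n, f (i.succ, 0)) *
        ∏ p ∈ univ.filter (fun p : Fin n × Fin n => p.2 < p.1), f (p.1.succ, p.2.succ) := by
  rw [prod_filter, prod_filter, Fintype.prod_prod_type, Fintype.prod_prod_type, Fin.prod_univ_succ,
    ← prod_mul_distrib]
  simp only [Fin.not_lt_zero, if_false, prod_const_one, one_mul]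
  refine prod_congr rfl fun i _ => ?_
  rw [Fin.prod_univ_succ]
  simp

theorem Fin.prod_filter_add_one_lt_succ (f : Fin (n + 2) × Fin (n + 2) → M) :
    ∏ p ∈ univ.filter (fun p : Fin (n + 2) × Fin (n + 2) => (p.2 : ℕ) + 1 < p.1), f p =
      (∏ i : Fin n, f (i.succ.succ, 0)) *
        ∏ p ∈ univ.filter (fun p : Fin (n + 1) × Fin (n + 1) => (p.2 : ℕ) + 1 < p.1),
          f (p.1.succ, p.2.succ) := by
  rw [prod_filter, prod_filter, Fintype.prod_prod_type, Fintype.prod_prod_type, Fin.prod_univ_succ,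
    ← Fin.prod_filter_pos_eq_prod_succ (fun i => f (i.succ, 0)), prod_filter, ← prod_mul_distrib]
  simp only [Fin.val_zero, Fin.val_succ, Nat.not_lt_zero, if_false, prod_const_one, one_mul]
  refine prod_congr rfl fun i _ => ?_
  rw [Fin.prod_univ_succ]
  simp

theorem Fin.prod_swap_zero_succ (p : Fin (n + 1)) (f : Fin (n + 1) → M) :
    ∏ i : Fin n, f (swap 0 p i.succ) = ∏ m ∈ univ.erase p, f m := by
  have h : univ.erase p = univ.map ((Fin.succEmb n).trans (swap 0 p).toEmbedding) := by
    ext m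
    simp only [mem_erase, mem_univ, and_true, mem_map, true_and, Embedding.trans_apply,
      Fin.coe_succEmb, coe_toEmbedding]
    constructor
    · intro hm
      obtain ⟨a, ha⟩ := Fin.exists_succ_eq.mpr
        (by simpa [swap_apply_eq_iff] using hm : swap 0 p m ≠ 0)
      exact ⟨a, by rw [ha, swap_apply_self]⟩
    · rintro ⟨a, rfl⟩
      simp [swap_apply_eq_iff]
  rw [h, prod_map]
  rfl

end Fin

section Field

variable {K : Type*} [Field K]

section PartialFractions

variable {ι : Type*} [Fintype ι] [DecidableEq ι] [Nonempty ι] {y : ι → K}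

theorem sum_prod_erase_one_sub_mul_div_eq_one (hy : Injective y) (hy0 : ∀ i, y i ≠ 0) (c : K) :
    ∑ p, ∏ m ∈ univ.erase p, (1 - c * y m) / (1 - y m / y p) = 1 := by
  have hinv : Set.InjOn (fun i => (y i)⁻¹) (univ : Finset ι) := (inv_injective.comp hy).injOn
  have h := congrArg (Polynomial.eval c) (Lagrange.sum_basis hinv univ_nonempty)
  rw [Polynomial.eval_finsetSum, Polynomial.eval_one] at h
  refine Eq.trans (sum_congr rfl fun p _ => ?_) h
  rw [Lagrange.basis, Polynomial.eval_prod]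
  refine prod_congr rfl fun m hm => ?_
  have hmp : y m ≠ y p := hy.ne (mem_erase.mp hm).1
  have := sub_ne_zero.mpr hmp
  have := sub_ne_zero.mpr hmp.symm
  have := hy0 m
  have := hy0 p
  simp only [Lagrange.basisDivisor, Polynomial.eval_mul, Polynomial.eval_C, Polynomial.eval_sub,
    Polynomial.eval_X]
  field_simp
  ring

theorem sum_mul_prod_erase_eq_prod (hy : Injective y) (hy0 : ∀ i, y i ≠ 0) {q u : K}
    (hu : ∀ i, 1 - q * (y i / u) ≠ 0) :
    ∑ p, (1 - y p) / (1 - q * (y p / u)) * ∏ m ∈ univ.erase p, (1 - y m) / (1 - y m / y p) =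
      ∏ i, (1 - y i) / (1 - q * (y i / u)) := by
  calc _ = ∑ p, (∏ i, (1 - y i) / (1 - q * (y i / u))) *
          ∏ m ∈ univ.erase p, (1 - q / u * y m) / (1 - y m / y p) := by
        refine sum_congr rfl fun p _ => ?_
        rw [← mul_prod_erase univ _ (mem_univ p), mul_assoc, ← prod_mul_distrib]
        congr 1
        refine prod_congr rfl fun m _ => ?_
        rw [mul_comm_div q u (y m), div_mul_div_cancel₀ (hu m)]
    _ = _ := by rw [← mul_sum, sum_prod_erase_one_sub_mul_div_eq_one hy hy0, mul_one]

end PartialFractions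

structure IsGeneric {ι : Type*} (q : K) (y : ι → K) : Prop where
  injective : Injective y
  ne_zero : ∀ i, y i ≠ 0
  mul_ne : Pairwise fun i j => q * y i ≠ y j

theorem IsGeneric.comp {ι κ : Type*} {q : K} {y : ι → K} (hy : IsGeneric q y) {f : κ → ι}
    (hf : Injective f) : IsGeneric q (y ∘ f) :=
  ⟨hy.injective.comp hf, fun i => hy.ne_zero (f i), fun _ _ hij => hy.mul_ne (hf.ne hij)⟩

theorem one_sub_mul_div_ne_zero {q x a : K} (ha : a ≠ 0) (h : q * x ≠ a) :
    1 - q * (x / a) ≠ 0 := by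
  rwa [← mul_div_assoc, sub_ne_zero, ne_comm, Ne, div_eq_one_iff_eq ha]

noncomputable def weight (q : K) {n : ℕ} (y : Fin n → K) : K :=
  (∏ p ∈ univ.filter (fun p : Fin n × Fin n => p.2 < p.1), (1 - y p.1 / y p.2)⁻¹) *
    (∏ p ∈ univ.filter (fun p : Fin n × Fin n => (p.2 : ℕ) + 1 < (p.1 : ℕ)),
      (1 - q * (y p.1 / y p.2))) *
    ∏ i ∈ univ.filter (fun i : Fin n => 0 < (i : ℕ)), (1 - y i)

theorem weight_fin_one (q : K) (y : Fin 1 → K) : weight q y = 1 := by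
  simp [weight, Fin.prod_filter_lt_succ]

theorem weight_cons_mul (q a : K) {n : ℕ} (g : Fin (n + 1) → K) :
    weight q (Fin.cons a g : Fin (n + 2) → K) * (1 - q * (g 0 / a)) =
      weight q g * (1 - g 0) * ∏ i, (1 - q * (g i / a)) / (1 - g i / a) := by
  rw [weight, weight, Fin.prod_filter_lt_succ, Fin.prod_filter_add_one_lt_succ,
    Fin.prod_filter_pos_eq_prod_succ, Fin.prod_filter_pos_eq_prod_succ]
  simp only [Fin.cons_zero, Fin.cons_succ]
  rw [prod_div_distrib, Fin.prod_univ_succ (fun i => 1 - q * (g i / a)),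
    Fin.prod_univ_succ (fun i => 1 - g i), prod_inv_distrib]
  ring

theorem weight_comp_decomposeFin_symm (q : K) {n : ℕ} (y : Fin (n + 2) → K) (p : Fin (n + 2))
    (e : Perm (Fin (n + 1))) (he : 1 - q * (y (swap 0 p (e 0).succ) / y p) ≠ 0) :
    weight q (y ∘ Perm.decomposeFin.symm (p, e)) =
      weight q (fun i => y (swap 0 p (e i).succ)) *
        ((1 - y (swap 0 p (e 0).succ)) / (1 - q * (y (swap 0 p (e 0).succ) / y p))) *
        ∏ m ∈ univ.erase p, (1 - q * (y m / y p)) / (1 - y m / y p) := by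
  have hcons :
      y ∘ Perm.decomposeFin.symm (p, e) = Fin.cons (y p) fun i => y (swap 0 p (e i).succ) := by
    funext i
    refine Fin.cases ?_ (fun j => ?_) i
    · simp [Perm.decomposeFin_symm_apply_zero]
    · simp [Perm.decomposeFin_symm_apply_succ]
  have key := weight_cons_mul q (y p) fun i => y (swap 0 p (e i).succ)
  rw [Equiv.prod_comp e fun j =>
      (1 - q * (y (swap 0 p j.succ) / y p)) / (1 - y (swap 0 p j.succ) / y p),
    Fin.prod_swap_zero_succ p fun m => (1 - q * (y m / y p)) / (1 - y m / y p)] at key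
  rw [hcons, eq_div_of_mul_eq he key]
  ring

theorem sum_perm_weight_mul_eq (q : K) {n : ℕ} {y : Fin (n + 1) → K} (hy : IsGeneric q y)
    (φ : K → K) :
    ∑ σ : Perm (Fin (n + 1)), weight q (y ∘ σ) * φ (y (σ 0)) =
      ∑ p, φ (y p) * ∏ m ∈ univ.erase p, (1 - y m) / (1 - y m / y p) := by
  induction n generalizing φ with
  | zero => simp [weight_fin_one]
  | succ n ih =>
    rw [← Equiv.sum_comp Perm.decomposeFin.symm, Fintype.sum_prod_type]
    refine sum_congr rfl fun p _ => ?_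
    have hD : ∀ m, m ≠ p → 1 - q * (y m / y p) ≠ 0 := fun m hm =>
      one_sub_mul_div_ne_zero (hy.ne_zero p) (hy.mul_ne hm)
    have hswap : ∀ i : Fin (n + 1), swap 0 p i.succ ≠ p := fun i => by simp [swap_apply_eq_iff]
    set g := fun i : Fin (n + 1) => y (swap 0 p i.succ)
    have hg : IsGeneric q g := hy.comp ((swap 0 p).injective.comp (Fin.succ_injective _))
    have tail : ∑ e : Perm (Fin (n + 1)),
        weight q (fun i => g (e i)) * ((1 - g (e 0)) / (1 - q * (g (e 0) / y p))) =
          ∏ m ∈ univ.erase p, (1 - y m) / (1 - q * (y m / y p)) := by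
      rw [← Fin.prod_swap_zero_succ, ← sum_mul_prod_erase_eq_prod hg.injective hg.ne_zero
        fun i => hD _ (hswap i)]
      exact ih hg fun x => (1 - x) / (1 - q * (x / y p))
    calc ∑ e, weight q (y ∘ Perm.decomposeFin.symm (p, e)) *
            φ (y (Perm.decomposeFin.symm (p, e) 0))
        = φ (y p) * (∏ m ∈ univ.erase p, (1 - q * (y m / y p)) / (1 - y m / y p)) *
            ∑ e : Perm (Fin (n + 1)),
              weight q (fun i => g (e i)) * ((1 - g (e 0)) / (1 - q * (g (e 0) / y p))) := by
          rw [mul_sum]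
          refine sum_congr rfl fun e _ => ?_
          rw [weight_comp_decomposeFin_symm q y p e (hD _ (hswap (e 0))),
            Perm.decomposeFin_symm_apply_zero]
          ring
      _ = φ (y p) * ∏ m ∈ univ.erase p, (1 - y m) / (1 - y m / y p) := by
          rw [tail, mul_assoc, ← prod_mul_distrib]
          congr 1
          refine prod_congr rfl fun m hm => ?_
          rw [mul_comm, div_mul_div_cancel₀ (hD m (mem_erase.mp hm).1)]

theorem sum_perm_weight_eq_one (q : K) {n : ℕ} {y : Fin n → K} (hy : IsGeneric q y) :
    ∑ σ : Perm (Fin n), weight q (y ∘ σ) = 1 := by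
  cases n with
  | zero => simp [weight]
  | succ n =>
    have h := sum_perm_weight_mul_eq q hy fun _ => 1
    simp only [mul_one, one_mul] at h
    rw [h]
    simpa using sum_prod_erase_one_sub_mul_div_eq_one hy.injective hy.ne_zero 1

end Field

theorem isGeneric_zV (n : ℕ) : IsGeneric (qV n) (zV n) := by
  have hinj : Injective (algebraMap (MvPolynomial (Option (Fin n)) ℚ) (KQ n)) :=
    IsFractionRing.injective _ _
  refine ⟨fun i j h => Option.some_injective _ (MvPolynomial.X_injective (hinj h)),
    fun i => ?_, fun i j _ h => ?_⟩
  · rw [zV, Ne, map_eq_zero_iff _ hinj]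
    exact MvPolynomial.X_ne_zero _
  · -- evaluate at `q = 2` and `z_k = 1`
    rw [qV, zV, zV, ← map_mul] at h
    simpa using congrArg (MvPolynomial.eval fun v : Option (Fin n) => v.elim (2 : ℚ) fun _ => 1)
      (hinj h)

theorem symmetrization_eq_one_general (n : ℕ) :
    ∑ σ : Equiv.Perm (Fin n),
        (∏ p ∈ Finset.univ.filter (fun p : Fin n × Fin n => p.2 < p.1),
            (1 - zV n (σ p.1) / zV n (σ p.2))⁻¹) *
          (∏ p ∈ Finset.univ.filter (fun p : Fin n × Fin n => (p.2 : ℕ) + 1 < (p.1 : ℕ)),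
            (1 - qV n * (zV n (σ p.1) / zV n (σ p.2)))) *
          ∏ i ∈ Finset.univ.filter (fun i : Fin n => 0 < (i : ℕ)), (1 - zV n (σ i)) = 1 := by
  have h := sum_perm_weight_eq_one (qV n) (isGeneric_zV n)
  simp only [weight, Function.comp_apply] at h
  exact h

/-- for `n ≥ 1`,
`Σ_{σ∈S_n} σ{ ∏_{i>j} 1/(1-z_i/z_j) · ∏_{i>j+1}(1-q z_i/z_j) · ∏_{i≥2}(1-z_i) } = 1`
in `ℚ(q, z_1, …, z_n)`. -/
theorem symmetrization_eq_one (n : ℕ) (hn : 1 ≤ n) :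
    ∑ σ : Equiv.Perm (Fin n),
        (∏ p ∈ Finset.univ.filter (fun p : Fin n × Fin n => p.2 < p.1),
            (1 - zV n (σ p.1) / zV n (σ p.2))⁻¹) *
          (∏ p ∈ Finset.univ.filter (fun p : Fin n × Fin n => (p.2 : ℕ) + 1 < (p.1 : ℕ)),
            (1 - qV n * (zV n (σ p.1) / zV n (σ p.2)))) *
          ∏ i ∈ Finset.univ.filter (fun i : Fin n => 0 < (i : ℕ)), (1 - zV n (σ i)) = 1 :=
  symmetrization_eq_one_general n
end

section
/- Let n ≥ 1 and let L_n(z_1,…,z_n) = Σ_{σ∈S_n} σ{ ∏_{i>j} 1/(1 - z_i/z_j) · ∏_{i>j+1} (1 - q z_i/z_j) · ∏_{i≥2} (1 - z_i) }. Then L_n is a polynomial in z_1, …, z_n, q, symmetric in z_1, …, z_n, of total degree at most n-1 in the variables z_1, …, z_n. -/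
/-!
Write `Δ = ∏_{j<i} (z_i - z_j)` for the Vandermonde determinant. Clearing denominators, the
summand of `σ = 1` times `Δ` is the polynomial
`N = ∏_{i>j+1} (q z_i - z_j) · ∏_{i=j+1} (-z_j) · ∏_{i≥2} (1 - z_i)`, and since `σΔ = sign σ · Δ`
we get `L_n · Δ = A := ∑_σ sign σ · σN`. The antisymmetric polynomial `A` changes sign under
the transposition of `z_i` and `z_j`, so it is divisible by the prime `z_i - z_j` (as `2` is
invertible); these primes are pairwise non-associated, hence `Δ ∣ A`. The quotient `L_n = A / Δ`
of two antisymmetric polynomials is symmetric, of degree at most `deg N - deg Δ = n - 1`.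
-/

open Finset

/-- `L_n(z_1,…,z_n) = Σ_{σ∈S_n} σ{ ∏_{i>j} 1/(1-z_i/z_j) · ∏_{i>j+1}(1-q z_i/z_j)
· ∏_{i≥2}(1-z_i) }` as an element of `ℚ(q, z_1, …, z_n)`. -/
noncomputable def Lfun (n : ℕ) : KQ n :=
  ∑ σ : Equiv.Perm (Fin n),
      (∏ p ∈ Finset.univ.filter (fun p : Fin n × Fin n => p.2 < p.1),
          (1 - zV n (σ p.1) / zV n (σ p.2))⁻¹) *
        (∏ p ∈ Finset.univ.filter (fun p : Fin n × Fin n => (p.2 : ℕ) + 1 < (p.1 : ℕ)),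
          (1 - qV n * (zV n (σ p.1) / zV n (σ p.2)))) *
        ∏ i ∈ Finset.univ.filter (fun i : Fin n => 0 < (i : ℕ)), (1 - zV n (σ i))

open MvPolynomial Matrix Equiv

theorem Finset.prod_dvd_of_prime_of_pairwise_not_dvd {ι M : Type*} [CommMonoidWithZero M]
    [IsCancelMulZero M] {s : Finset ι} {f : ι → M} {a : M} (hp : ∀ i ∈ s, Prime (f i))
    (hs : (s : Set ι).Pairwise fun i j => ¬ f i ∣ f j) (hdvd : ∀ i ∈ s, f i ∣ a) :
    ∏ i ∈ s, f i ∣ a := by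
  classical
  induction s using Finset.induction generalizing a with
  | empty => simp
  | insert i s hi ih =>
    obtain ⟨b, rfl⟩ := hdvd i (mem_insert_self i s)
    rw [prod_insert hi]
    refine mul_dvd_mul_left _ (ih (fun j hj => hp j (mem_insert_of_mem hj))
      (hs.mono (by simp)) fun j hj => ?_)
    have hji : j ≠ i := fun h => hi (h ▸ hj)
    exact ((hp j (mem_insert_of_mem hj)).dvd_or_dvd (hdvd j (mem_insert_of_mem hj))).resolve_left
      (hs (mem_insert_of_mem hj) (mem_insert_self i s) hji)

theorem Fin.card_filter_val_pos (n : ℕ) : #(univ.filter fun i : Fin n => 0 < (i : ℕ)) = n - 1 := by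
  have h := card_filter_add_card_filter_not (s := (univ : Finset (Fin n)))
    (p := fun i => (i : ℕ) < 1)
  simp only [Fin.card_filter_val_lt, card_univ, Fintype.card_fin, not_lt,
    Nat.one_le_iff_ne_zero, ← Nat.pos_iff_ne_zero] at h
  omega

namespace MvPolynomial

variable {R σ : Type*} [CommRing R]

theorem prime_X_sub_X [IsDomain R] {i j : σ} (hij : i ≠ j) :
    Prime (X i - X j : MvPolynomial σ R) := by
  classical
  let e := (renameEquiv R (Equiv.optionSubtypeNe i).symm).trans (optionEquivLeft R _)
  have he : e (X i - X j) = Polynomial.X - Polynomial.C (X ⟨j, hij.symm⟩) := by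
    simp [e, Equiv.optionSubtypeNe_symm_of_ne hij.symm]
  rw [← MulEquiv.prime_iff e.toMulEquiv]
  exact he ▸ Polynomial.prime_X_sub_C _

theorem eq_or_eq_of_X_sub_X_dvd [Nontrivial R] {i j k l : σ} (hkl : k ≠ l)
    (h : (X i - X j : MvPolynomial σ R) ∣ X k - X l) : k = i ∨ k = j := by
  classical
  by_contra! hk
  have := map_dvd (eval fun x => if x = k then (1 : R) else 0) h
  simp [hk.1.symm, hk.2.symm, hkl.symm] at this

theorem X_sub_X_dvd_sub_rename_swap [DecidableEq σ] (i j : σ) (f : MvPolynomial σ R) :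
    X i - X j ∣ f - rename (swap i j) f := by
  let π := Ideal.Quotient.mkₐ R (Ideal.span {(X i - X j : MvPolynomial σ R)})
  have hij : π (X i) = π (X j) := Ideal.Quotient.eq.mpr (Ideal.mem_span_singleton_self _)
  have hπ : π.comp (rename (swap i j)) = π := by
    ext k
    rcases eq_or_ne k i with rfl | hki
    · simp [hij]
    rcases eq_or_ne k j with rfl | hkj
    · simp [hij]
    · simp [swap_apply_of_ne_of_ne hki hkj]
  rw [← Ideal.mem_span_singleton, ← Ideal.Quotient.eq]
  exact (DFunLike.congr_fun hπ f).symm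

theorem totalDegree_prod_le_card {ι : Type*} (s : Finset ι) {f : ι → MvPolynomial σ R}
    (h : ∀ i ∈ s, (f i).totalDegree ≤ 1) : (∏ i ∈ s, f i).totalDegree ≤ #s :=
  (totalDegree_finsetProd s f).trans ((sum_le_sum h).trans_eq (card_eq_sum_ones s).symm)

theorem totalDegree_le_of_mul_le [IsDomain R] {g p : MvPolynomial σ R} {d : ℕ} (hg : g ≠ 0)
    (h : (g * p).totalDegree ≤ g.totalDegree + d) : p.totalDegree ≤ d := by
  rcases eq_or_ne p 0 with rfl | hp
  · simp
  rw [totalDegree_mul_of_isDomain hg hp] at h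
  omega

section Antisymmetric

variable [Fintype σ] [DecidableEq σ]

def IsAntisymmetric (f : MvPolynomial σ R) : Prop :=
  ∀ τ : Perm σ, rename τ f = Perm.sign τ • f

noncomputable def antisymmetrize (f : MvPolynomial σ R) : MvPolynomial σ R :=
  ∑ τ : Perm σ, Perm.sign τ • rename τ f

theorem isAntisymmetric_antisymmetrize (f : MvPolynomial σ R) :
    IsAntisymmetric (antisymmetrize f) := by
  intro τ
  simp only [antisymmetrize, map_sum, Units.smul_def, map_zsmul, rename_rename, smul_sum,
    smul_smul]
  refine Fintype.sum_equiv (Equiv.mulLeft τ) _ _ fun ρ => ?_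
  simp [Perm.sign_mul, ← mul_assoc]

theorem totalDegree_antisymmetrize_le (f : MvPolynomial σ R) :
    (antisymmetrize f).totalDegree ≤ f.totalDegree :=
  totalDegree_finsetSum_le fun τ _ => by
    rw [Units.smul_def]
    exact (totalDegree_smul_le _ _).trans (totalDegree_rename_le _ _)

theorem IsAntisymmetric.isSymmetric_of_mul [IsDomain R] {g p : MvPolynomial σ R}
    (hg : IsAntisymmetric g) (hg0 : g ≠ 0) (hgp : IsAntisymmetric (g * p)) : p.IsSymmetric := by
  intro τ
  have h := hgp τ
  rw [map_mul, hg τ, smul_mul_assoc, smul_left_cancel_iff] at h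
  exact mul_left_cancel₀ hg0 h

end Antisymmetric

end MvPolynomial

section Vandermonde

def lowerPairs (n : ℕ) : Finset (Fin n × Fin n) := univ.filter fun p => p.2 < p.1

variable {R S : Type*} [CommRing R] [CommRing S] {n : ℕ}

theorem det_vandermonde_eq_prod_lowerPairs (v : Fin n → R) :
    (vandermonde v).det = ∏ p ∈ lowerPairs n, (v p.1 - v p.2) := by
  rw [det_vandermonde]
  exact (prod_finset_product_right' (lowerPairs n) univ Ioi (by simp [lowerPairs])
    (f := fun a c => v a - v c)).symm

theorem RingHom.map_det_vandermonde (f : R →+* S) (v : Fin n → R) :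
    f (vandermonde v).det = (vandermonde (f ∘ v)).det := by
  simp [det_vandermonde_eq_prod_lowerPairs, map_prod]

theorem det_vandermonde_comp_perm (v : Fin n → R) (τ : Perm (Fin n)) :
    (vandermonde (v ∘ τ)).det = Perm.sign τ • (vandermonde v).det := by
  rw [show vandermonde (v ∘ τ) = (vandermonde v).submatrix τ id from rfl, det_permute,
    Units.smul_def, zsmul_eq_mul]

namespace MvPolynomial

theorem isAntisymmetric_det_vandermonde_X :
    IsAntisymmetric (vandermonde (X : Fin n → MvPolynomial (Fin n) R)).det := by
  intro τ
  rw [← det_vandermonde_comp_perm, ← AlgHom.coe_toRingHom, RingHom.map_det_vandermonde]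
  congr 2
  ext i
  simp

theorem det_vandermonde_X_ne_zero [IsDomain R] :
    (vandermonde (X : Fin n → MvPolynomial (Fin n) R)).det ≠ 0 :=
  det_vandermonde_ne_zero_iff.mpr X_injective

theorem totalDegree_det_vandermonde_X [IsDomain R] :
    (vandermonde (X : Fin n → MvPolynomial (Fin n) R)).det.totalDegree = #(lowerPairs n) := by
  refine IsHomogeneous.totalDegree ?_ det_vandermonde_X_ne_zero
  rw [det_vandermonde_eq_prod_lowerPairs, card_eq_sum_ones]
  exact IsHomogeneous.prod _ _ _ fun p _ => (isHomogeneous_X R p.1).sub (isHomogeneous_X R p.2)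

theorem IsAntisymmetric.det_vandermonde_X_dvd [IsDomain R] (h2 : IsUnit (2 : R))
    {f : MvPolynomial (Fin n) R} (hf : IsAntisymmetric f) :
    (vandermonde (X : Fin n → MvPolynomial (Fin n) R)).det ∣ f := by
  have hlt {p : Fin n × Fin n} (hp : p ∈ lowerPairs n) : p.2 < p.1 := (mem_filter.mp hp).2
  rw [det_vandermonde_eq_prod_lowerPairs]
  refine prod_dvd_of_prime_of_pairwise_not_dvd (fun p hp => prime_X_sub_X (hlt hp).ne')
    (fun p hp p' hp' hne hdvd => hne ?_) fun p hp => ?_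
  · have h1 := eq_or_eq_of_X_sub_X_dvd (hlt hp').ne' hdvd
    have h2 := eq_or_eq_of_X_sub_X_dvd (hlt hp').ne (dvd_neg.mpr hdvd |>.trans (by rw [neg_sub]))
    have := hlt hp
    have := hlt hp'
    ext <;> grind
  · have h := X_sub_X_dvd_sub_rename_swap p.1 p.2 f
    rw [hf, Perm.sign_swap (hlt hp).ne', Units.neg_smul, one_smul, sub_neg_eq_add, ← two_mul,
      ← map_ofNat C] at h
    exact ((h2.map C).dvd_mul_left).mp h

end MvPolynomial

end Vandermonde

section ClearingDenominators

variable {n : ℕ}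

def lSummand {K : Type*} [Field K] (q : K) (v : Fin n → K) : K :=
  (∏ p ∈ lowerPairs n, (1 - v p.1 / v p.2)⁻¹) *
    (∏ p ∈ univ.filter (fun p : Fin n × Fin n => (p.2 : ℕ) + 1 < (p.1 : ℕ)),
      (1 - q * (v p.1 / v p.2))) *
    ∏ i ∈ univ.filter (fun i : Fin n => 0 < (i : ℕ)), (1 - v i)

def lNumerator {R : Type*} [CommRing R] (q : R) (v : Fin n → R) : R :=
  (∏ p ∈ lowerPairs n, if (p.2 : ℕ) + 1 < (p.1 : ℕ) then q * v p.1 - v p.2 else -v p.2) *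
    ∏ i ∈ univ.filter (fun i : Fin n => 0 < (i : ℕ)), (1 - v i)

theorem Lfun_eq_sum_lSummand (n : ℕ) :
    Lfun n = ∑ σ : Perm (Fin n), lSummand (qV n) (zV n ∘ σ) :=
  rfl

theorem RingHom.map_lNumerator {R S : Type*} [CommRing R] [CommRing S] (f : R →+* S) (q : R)
    (v : Fin n → R) : f (lNumerator q v) = lNumerator (f q) (f ∘ v) := by
  simp [lNumerator, map_prod, apply_ite f]

section Field

variable {K : Type*} [Field K]

theorem lSummand_mul_det_vandermonde (q : K) {v : Fin n → K} (hv : Function.Injective v)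
    (hv0 : ∀ i, v i ≠ 0) : lSummand q v * (vandermonde v).det = lNumerator q v := by
  have hfar : univ.filter (fun p : Fin n × Fin n => (p.2 : ℕ) + 1 < (p.1 : ℕ))
      = (lowerPairs n).filter fun p => (p.2 : ℕ) + 1 < (p.1 : ℕ) := by
    ext p
    simp only [lowerPairs, mem_filter, mem_univ, true_and, Fin.lt_def]
    omega
  rw [lSummand, lNumerator, det_vandermonde_eq_prod_lowerPairs, hfar, prod_filter,
    mul_right_comm _ (∏ i ∈ univ.filter (fun i : Fin n => 0 < (i : ℕ)), (1 - v i)),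
    ← prod_mul_distrib, ← prod_mul_distrib]
  congr 1
  refine prod_congr rfl fun p hp => ?_
  have hne : v p.2 - v p.1 ≠ 0 := sub_ne_zero.mpr (hv.ne (mem_filter.mp hp).2.ne)
  have h0 := hv0 p.2
  split_ifs <;> field_simp <;> ring

theorem sum_lSummand_mul_det_vandermonde (q : K) {v : Fin n → K} (hv : Function.Injective v)
    (hv0 : ∀ i, v i ≠ 0) :
    (∑ σ : Perm (Fin n), lSummand q (v ∘ σ)) * (vandermonde v).det
      = ∑ σ : Perm (Fin n), Perm.sign σ • lNumerator q (v ∘ σ) := by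
  rw [sum_mul]
  refine sum_congr rfl fun σ _ => ?_
  have hdet : (vandermonde v).det = Perm.sign σ • (vandermonde (v ∘ σ)).det := by
    rw [det_vandermonde_comp_perm, smul_smul, Int.units_mul_self, one_smul]
  rw [hdet, mul_smul_comm,
    lSummand_mul_det_vandermonde q (hv.comp σ.injective) fun i => hv0 (σ i)]

end Field

namespace MvPolynomial

variable {R S : Type*} [CommRing R] [CommRing S]

theorem totalDegree_lNumerator_X_le (c : R) :
    (lNumerator (C c) (X : Fin n → MvPolynomial (Fin n) R)).totalDegree
      ≤ #(lowerPairs n) + (n - 1) := by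
  rw [← Fin.card_filter_val_pos]
  refine (totalDegree_mul _ _).trans (add_le_add (totalDegree_prod_le_card _ fun p _ => ?_)
    (totalDegree_prod_le_card _ fun i _ => ?_))
  · split_ifs
    · exact (((isHomogeneous_C _ c).mul (isHomogeneous_X R p.1)).sub
        (isHomogeneous_X R p.2)).totalDegree_le
    · exact (isHomogeneous_X R p.2).neg.totalDegree_le
  · exact (totalDegree_sub _ _).trans
      (max_le (totalDegree_one.trans_le zero_le_one) (isHomogeneous_X R i).totalDegree_le)

theorem eval₂Hom_antisymmetrize_lNumerator (f : R →+* S) (c : R) (v : Fin n → S) :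
    eval₂Hom f v (antisymmetrize (lNumerator (C c) X))
      = ∑ σ : Perm (Fin n), Perm.sign σ • lNumerator (f c) (v ∘ σ) := by
  simp only [antisymmetrize, map_sum, Units.smul_def, map_zsmul]
  refine sum_congr rfl fun σ _ => ?_
  rw [coe_eval₂Hom, eval₂_rename, ← coe_eval₂Hom, RingHom.map_lNumerator]
  congr 2
  · simp
  · ext i
    simp

end MvPolynomial

end ClearingDenominators

noncomputable def evalQZ (n : ℕ) : MvPolynomial (Fin n) (Polynomial ℚ) →+* KQ n :=
  eval₂Hom (Polynomial.eval₂RingHom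
    ((algebraMap (MvPolynomial (Option (Fin n)) ℚ) (KQ n)).comp
      (algebraMap ℚ (MvPolynomial (Option (Fin n)) ℚ))) (qV n)) (zV n)

theorem zV_injective (n : ℕ) : Function.Injective (zV n) :=
  (IsFractionRing.injective _ (KQ n)).comp (X_injective.comp (Option.some_injective _))

theorem zV_ne_zero {n : ℕ} (i : Fin n) : zV n i ≠ 0 :=
  (map_ne_zero_iff _ (IsFractionRing.injective _ (KQ n))).mpr (X_ne_zero _)

theorem evalQZ_comp_X (n : ℕ) : evalQZ n ∘ X = zV n :=
  funext fun i => eval₂Hom_X' _ _ i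

theorem evalQZ_det_vandermonde_X_ne_zero (n : ℕ) : evalQZ n (vandermonde X).det ≠ 0 := by
  rw [RingHom.map_det_vandermonde, evalQZ_comp_X]
  exact det_vandermonde_ne_zero_iff.mpr (zV_injective n)

theorem evalQZ_antisymmetrize_lNumerator (n : ℕ) :
    evalQZ n (antisymmetrize (lNumerator (C Polynomial.X) X))
      = evalQZ n (vandermonde X).det * Lfun n := by
  rw [mul_comm, RingHom.map_det_vandermonde, evalQZ_comp_X, Lfun_eq_sum_lSummand,
    sum_lSummand_mul_det_vandermonde _ (zV_injective n) zV_ne_zero, evalQZ,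
    eval₂Hom_antisymmetrize_lNumerator]
  simp

theorem Lfun_polynomial_general (n : ℕ) :
    ∃ p : MvPolynomial (Fin n) (Polynomial ℚ),
      p.IsSymmetric ∧ p.totalDegree ≤ n - 1 ∧
        MvPolynomial.eval₂
          (Polynomial.eval₂RingHom
            ((algebraMap (MvPolynomial (Option (Fin n)) ℚ) (KQ n)).comp
              (algebraMap ℚ (MvPolynomial (Option (Fin n)) ℚ)))
            (qV n))
          (zV n) p = Lfun n := by
  have hA := isAntisymmetric_antisymmetrize
    (lNumerator (C Polynomial.X) (X : Fin n → MvPolynomial (Fin n) (Polynomial ℚ)))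
  have h2 : IsUnit (2 : Polynomial ℚ) := by
    simpa only [map_ofNat] using (isUnit_iff_ne_zero.mpr (two_ne_zero (α := ℚ))).map Polynomial.C
  obtain ⟨p, hp⟩ := hA.det_vandermonde_X_dvd h2
  refine ⟨p, isAntisymmetric_det_vandermonde_X.isSymmetric_of_mul det_vandermonde_X_ne_zero
    (hp ▸ hA), totalDegree_le_of_mul_le det_vandermonde_X_ne_zero ?_, ?_⟩
  · rw [← hp, totalDegree_det_vandermonde_X]
    exact (totalDegree_antisymmetrize_le _).trans (totalDegree_lNumerator_X_le _)
  · refine mul_left_cancel₀ (evalQZ_det_vandermonde_X_ne_zero n) ?_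
    rw [← evalQZ_antisymmetrize_lNumerator, hp, map_mul]
    rfl

/-- `L_n` is a polynomial in `z_1, …, z_n, q`, symmetric in the `z_i`,
of total degree at most `n-1` in the `z_i`. We express it as the image of a
symmetric polynomial `p` in `n` variables with coefficients in `ℚ[q]`. -/
theorem Lfun_polynomial (n : ℕ) (hn : 1 ≤ n) :
    ∃ p : MvPolynomial (Fin n) (Polynomial ℚ),
      p.IsSymmetric ∧ p.totalDegree ≤ n - 1 ∧
        MvPolynomial.eval₂
          (Polynomial.eval₂RingHom
            ((algebraMap (MvPolynomial (Option (Fin n)) ℚ) (KQ n)).comp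
              (algebraMap ℚ (MvPolynomial (Option (Fin n)) ℚ)))
            (qV n))
          (zV n) p = Lfun n :=
  Lfun_polynomial_general n
end
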